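/- Let R > 0 and k, m, n ∈ ℕ₀ with n + 1 − m ≥ 0, and let φ ∈ C^∞([−R,R]). For f ∈ C^∞([−R,R]) define Tf(x) = x^{−m} ∫₀^x y^n φ(y) f(y) dy for x ∈ [−R,R] ∖ {0}. Then: (1) Tf extends to a function in C^∞([−R,R]) for every f ∈ C^∞([−R,R]); and (2) there is a constant C > 0, depending only on R, k, m, n, φ, such that ‖Tf‖_{H^k(𝔹_R)} ≤ C ‖f‖_{H^k(𝔹_R)} for all f ∈ C^∞([−R,R]). -/

import Mathlib

open Real MeasureTheory intervalIntegral

/-- The one-dimensional Sobolev norm on the interval `(−R,R)`. -/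
noncomputable def sob1 (R : ℝ) (m : ℕ) (f : ℝ → ℝ) : ℝ :=
  ∑ j ∈ Finset.range (m + 1),
    Real.sqrt (∫ x in Set.Ioo (-R) R, (iteratedDeriv j f x) ^ 2)

/-- The integral operator `Tf(x) = x^{−m} ∫₀^x y^n φ(y) f(y) dy`. -/
noncomputable def Tint (m n : ℕ) (φ f : ℝ → ℝ) : ℝ → ℝ :=
  fun x => (∫ y in (0:ℝ)..x, y ^ n * φ y * f y) / x ^ m

/-!
Substituting `y = t x` gives `Tf(x) = x^(n+1-m) ∫₀¹ tⁿ (φ f)(t x) dt`, which is smooth across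
the origin: differentiating under the integral sign, the `j`-th derivative of `∫₀¹ tⁿ u(t x) dt`
is `∫₀¹ t^(n+j) u⁽ʲ⁾(t x) dt`. By Leibniz' rule every derivative of order `≤ k` of `Tf` is then
bounded on `[-R, R]` by a constant times the Hardy average `Hw(x) = ∫₀¹ w(t x) dt` of
`w = ∑_{c ≤ k} |f⁽ᶜ⁾|`, and Hardy's inequality `‖Hw‖_{L²(-R,R)} ≤ 2 ‖w‖_{L²(-R,R)}` concludes.
-/

open Set

theorem sq_integral_mul_le {α : Type*} [MeasurableSpace α] {μ : Measure α} {f g : α → ℝ}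
    (hf : MemLp f 2 μ) (hg : MemLp g 2 μ) :
    (∫ a, f a * g a ∂μ) ^ 2 ≤ (∫ a, f a ^ 2 ∂μ) * ∫ a, g a ^ 2 ∂μ := by
  have h := integral_mul_norm_le_Lp_mul_Lq (μ := μ) (f := f) (g := g) .two_two
    (by simpa using hf) (by simpa using hg)
  simp only [Real.norm_eq_abs, Real.rpow_two, sq_abs] at h
  have hF : 0 ≤ ∫ a, f a ^ 2 ∂μ := integral_nonneg fun a => sq_nonneg _
  have hG : 0 ≤ ∫ a, g a ^ 2 ∂μ := integral_nonneg fun a => sq_nonneg _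
  calc (∫ a, f a * g a ∂μ) ^ 2 ≤ (∫ a, |f a| * |g a| ∂μ) ^ 2 := by
        rw [← sq_abs]
        refine pow_le_pow_left₀ (abs_nonneg _) ?_ 2
        simpa only [abs_mul] using
          MeasureTheory.abs_integral_le_integral_abs (f := fun a => f a * g a) (μ := μ)
    _ ≤ ((∫ a, f a ^ 2 ∂μ) ^ (1 / 2 : ℝ) * (∫ a, g a ^ 2 ∂μ) ^ (1 / 2 : ℝ)) ^ 2 :=
        pow_le_pow_left₀ (MeasureTheory.integral_nonneg fun a => by positivity) h 2
    _ = (∫ a, f a ^ 2 ∂μ) * ∫ a, g a ^ 2 ∂μ := by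
        rw [mul_pow, ← Real.sqrt_eq_rpow, ← Real.sqrt_eq_rpow, Real.sq_sqrt hF, Real.sq_sqrt hG]

theorem sqrt_sum_le_sum_sqrt {ι : Type*} (s : Finset ι) {a : ι → ℝ} (ha : ∀ i ∈ s, 0 ≤ a i) :
    √(∑ i ∈ s, a i) ≤ ∑ i ∈ s, √(a i) := by
  rw [Real.sqrt_le_left (Finset.sum_nonneg fun i _ => Real.sqrt_nonneg _)]
  calc ∑ i ∈ s, a i = ∑ i ∈ s, √(a i) ^ 2 :=
        Finset.sum_congr rfl fun i hi => (Real.sq_sqrt (ha i hi)).symm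
    _ ≤ (∑ i ∈ s, √(a i)) ^ 2 :=
        Finset.sum_sq_le_sq_sum_of_nonneg fun i _ => Real.sqrt_nonneg _

theorem rpow_sq {t : ℝ} (ht : 0 ≤ t) (a : ℝ) : (t ^ a) ^ 2 = t ^ (2 * a) := by
  rw [mul_comm, ← Real.rpow_mul_natCast ht]; norm_num

theorem integrableOn_rpow_neg_half :
    IntegrableOn (fun t : ℝ => t ^ (-(1 / 2) : ℝ)) (Ioc 0 1) := by
  rw [← intervalIntegrable_iff_integrableOn_Ioc_of_le zero_le_one]
  exact intervalIntegral.intervalIntegrable_rpow' (by norm_num)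

theorem integral_rpow_neg_half : ∫ t in Ioc (0:ℝ) 1, t ^ (-(1 / 2) : ℝ) = 2 := by
  rw [← intervalIntegral.integral_of_le zero_le_one, integral_rpow (Or.inl (by norm_num))]
  norm_num

open Metric in
theorem hasDerivAt_intervalIntegral_of_continuous {F F' : ℝ → ℝ → ℝ} {a b : ℝ}
    (hF : Continuous (Function.uncurry F)) (hF' : Continuous (Function.uncurry F'))
    (hderiv : ∀ x t, HasDerivAt (F · t) (F' x t) x) (x₀ : ℝ) :
    HasDerivAt (fun x => ∫ t in a..b, F x t) (∫ t in a..b, F' x₀ t) x₀ := by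
  obtain ⟨C, hC⟩ := (isCompact_closedBall x₀ 1 |>.prod isCompact_uIcc).exists_bound_of_continuousOn
    (f := Function.uncurry F') hF'.continuousOn
  have hFx : ∀ x, Continuous (F x) := fun x => hF.comp (Continuous.prodMk_right x)
  refine (intervalIntegral.hasDerivAt_integral_of_dominated_loc_of_deriv_le (bound := fun _ => C)
    (ball_mem_nhds x₀ one_pos) (Filter.Eventually.of_forall fun x => (hFx x).aestronglyMeasurable)
    ((hFx x₀).intervalIntegrable _ _)
    (hF'.comp (Continuous.prodMk_right x₀)).aestronglyMeasurable ?_ intervalIntegrable_const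
    (Filter.Eventually.of_forall fun t _ x _ => hderiv x t)).2
  exact Filter.Eventually.of_forall fun t ht x hx =>
    hC (x, t) ⟨ball_subset_closedBall hx, uIoc_subset_uIcc ht⟩

noncomputable def weightedAvg (n : ℕ) (u : ℝ → ℝ) (x : ℝ) : ℝ :=
  ∫ t in (0:ℝ)..1, t ^ n * u (t * x)

theorem weightedAvg_eq_div (n : ℕ) (u : ℝ → ℝ) {x : ℝ} (hx : x ≠ 0) :
    weightedAvg n u x = (∫ y in (0:ℝ)..x, y ^ n * u y) / x ^ (n + 1) := by
  have h := intervalIntegral.integral_comp_mul_right (fun y => (y / x) ^ n * u y) hx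
    (a := 0) (b := 1)
  simp only [mul_div_cancel_right₀ _ hx, zero_mul, one_mul, smul_eq_mul, div_pow] at h
  have h_div : ∫ y in (0:ℝ)..x, y ^ n / x ^ n * u y
      = (∫ y in (0:ℝ)..x, y ^ n * u y) / x ^ n := by
    rw [← intervalIntegral.integral_div]
    exact intervalIntegral.integral_congr fun y _ => by ring
  rw [weightedAvg, h, h_div, pow_succ]
  field_simp

theorem hasDerivAt_weightedAvg (n : ℕ) {u : ℝ → ℝ} (hu : ContDiff ℝ 1 u) (x : ℝ) :
    HasDerivAt (weightedAvg n u) (weightedAvg (n + 1) (deriv u) x) x := by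
  refine hasDerivAt_intervalIntegral_of_continuous (F := fun x t => t ^ n * u (t * x))
    (F' := fun x t => t ^ (n + 1) * deriv u (t * x))
    ((continuous_snd.pow n).mul (hu.continuous.comp (continuous_snd.mul continuous_fst)))
    ((continuous_snd.pow (n + 1)).mul
      ((hu.continuous_deriv le_rfl).comp (continuous_snd.mul continuous_fst)))
    (fun x t => ?_) x
  have h := ((hu.differentiable one_ne_zero (t * x)).hasDerivAt.comp x
    ((hasDerivAt_id x).const_mul t)).const_mul (t ^ n)
  exact h.congr_deriv (by ring)

theorem deriv_weightedAvg (n : ℕ) {u : ℝ → ℝ} (hu : ContDiff ℝ 1 u) :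
    deriv (weightedAvg n u) = weightedAvg (n + 1) (deriv u) :=
  funext fun x => (hasDerivAt_weightedAvg n hu x).deriv

theorem contDiff_weightedAvg (n N : ℕ) {u : ℝ → ℝ} (hu : ContDiff ℝ N u) :
    ContDiff ℝ N (weightedAvg n u) := by
  induction N generalizing n u with
  | zero =>
    exact contDiff_zero.2 (intervalIntegral.continuous_parametric_intervalIntegral_of_continuous'
      ((continuous_snd.pow n).mul ((contDiff_zero.1 hu).comp (continuous_snd.mul continuous_fst)))
      0 1)
  | succ N ih =>
    have hu1 : ContDiff ℝ 1 u := hu.of_le (by exact_mod_cast Nat.le_add_left 1 N)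
    rw [Nat.cast_succ, contDiff_succ_iff_deriv] at hu ⊢
    refine ⟨fun x => (hasDerivAt_weightedAvg n hu1 x).differentiableAt, by simp, ?_⟩
    rw [deriv_weightedAvg n hu1]
    exact ih (n + 1) hu.2.2

theorem iteratedDeriv_weightedAvg (n j : ℕ) {u : ℝ → ℝ} (hu : ContDiff ℝ j u) :
    iteratedDeriv j (weightedAvg n u) = weightedAvg (n + j) (iteratedDeriv j u) := by
  induction j generalizing n u with
  | zero => simp
  | succ j ih =>
    have hu1 : ContDiff ℝ 1 u := hu.of_le (by exact_mod_cast Nat.le_add_left 1 j)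
    rw [Nat.cast_succ, contDiff_succ_iff_deriv] at hu
    rw [iteratedDeriv_succ', deriv_weightedAvg n hu1, ih (n + 1) hu.2.2, ← iteratedDeriv_succ',
      add_right_comm, add_assoc]

theorem abs_weightedAvg_le (n : ℕ) {v w : ℝ → ℝ} (hv : Continuous v) (hw : Continuous w)
    {C x : ℝ} (h : ∀ t ∈ Icc (0:ℝ) 1, |v (t * x)| ≤ C * w (t * x)) :
    |weightedAvg n v x| ≤ C * weightedAvg 0 w x := by
  have hvx : Continuous fun t => t ^ n * v (t * x) :=
    (continuous_pow n).mul (hv.comp (continuous_mul_const x))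
  have hwx : Continuous fun t => C * w (t * x) :=
    continuous_const.mul (hw.comp (continuous_mul_const x))
  calc |weightedAvg n v x| ≤ ∫ t in (0:ℝ)..1, |t ^ n * v (t * x)| :=
        intervalIntegral.abs_integral_le_integral_abs zero_le_one
    _ ≤ ∫ t in (0:ℝ)..1, C * w (t * x) := by
        refine intervalIntegral.integral_mono_on zero_le_one (hvx.abs.intervalIntegrable _ _)
          (hwx.intervalIntegrable _ _) fun t ht => ?_
        rw [abs_mul, abs_pow, abs_of_nonneg ht.1]
        exact (mul_le_of_le_one_left (abs_nonneg _) (pow_le_one₀ ht.1 ht.2)).trans (h t ht)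
    _ = C * weightedAvg 0 w x := by
        simp only [weightedAvg, pow_zero, one_mul, intervalIntegral.integral_const_mul]

theorem sq_weightedAvg_zero_le {w : ℝ → ℝ} (hw : Continuous w) (x : ℝ) :
    weightedAvg 0 w x ^ 2 ≤ 2 * ∫ t in Ioc (0:ℝ) 1, t ^ (1 / 2 : ℝ) * w (t * x) ^ 2 := by
  -- Cauchy–Schwarz against `t ^ (-1/4)`: its square is integrable on `(0, 1]`, and the factor
  -- `t ^ (1/2)` left on `w²` is what makes the later integration in `x` converge.
  have h_split : weightedAvg 0 w x
      = ∫ t in Ioc (0:ℝ) 1, t ^ (-(1 / 4) : ℝ) * (t ^ (1 / 4 : ℝ) * w (t * x)) := by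
    rw [weightedAvg, intervalIntegral.integral_of_le zero_le_one]
    refine setIntegral_congr_fun measurableSet_Ioc fun t ht => ?_
    rw [← mul_assoc, ← Real.rpow_add ht.1]
    norm_num
  have h_weight : MemLp (fun t : ℝ => t ^ (-(1 / 4) : ℝ)) 2 (volume.restrict (Ioc 0 1)) := by
    refine (memLp_two_iff_integrable_sq (measurable_id.pow_const _).aestronglyMeasurable).2 ?_
    refine integrableOn_rpow_neg_half.congr_fun (fun t ht => ?_) measurableSet_Ioc
    simp only [id, rpow_sq ht.1.le]; norm_num
  have h_fun : MemLp (fun t : ℝ => t ^ (1 / 4 : ℝ) * w (t * x)) 2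
      (volume.restrict (Ioc 0 1)) := by
    have hc : Continuous fun t : ℝ => t ^ (1 / 4 : ℝ) * w (t * x) :=
      (Real.continuous_rpow_const (by norm_num)).mul (hw.comp (continuous_mul_const x))
    refine (memLp_two_iff_integrable_sq hc.aestronglyMeasurable).2 ?_
    exact (hc.pow 2).integrableOn_Icc.mono_set Ioc_subset_Icc_self
  rw [h_split]
  refine (sq_integral_mul_le h_weight h_fun).trans_eq ?_
  rw [show ∫ t in Ioc (0:ℝ) 1, (t ^ (-(1 / 4) : ℝ)) ^ 2 = 2 from ?_]
  · congr 1
    refine setIntegral_congr_fun measurableSet_Ioc fun t ht => ?_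
    rw [mul_pow, rpow_sq ht.1.le]; norm_num
  · rw [← integral_rpow_neg_half]
    refine setIntegral_congr_fun measurableSet_Ioc fun t ht => ?_
    rw [rpow_sq ht.1.le]; norm_num

theorem integral_sq_comp_mul_le {R t : ℝ} (hR : 0 ≤ R) (ht : t ∈ Ioc 0 1) {w : ℝ → ℝ}
    (hw : Continuous w) :
    ∫ x in Ioo (-R) R, w (t * x) ^ 2 ≤ t⁻¹ * ∫ x in Ioo (-R) R, w x ^ 2 := by
  have hRR : -R ≤ R := by linarith
  simp only [← integral_Ioc_eq_integral_Ioo, ← intervalIntegral.integral_of_le hRR]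
  rw [intervalIntegral.integral_comp_mul_left (fun y => w y ^ 2) ht.1.ne', smul_eq_mul]
  refine mul_le_mul_of_nonneg_left ?_ (inv_nonneg.2 ht.1.le)
  refine intervalIntegral.integral_mono_interval (by nlinarith [ht.2]) (by nlinarith [ht.1])
    (by nlinarith [ht.2]) (Filter.Eventually.of_forall fun y => sq_nonneg _)
    ((hw.pow 2).intervalIntegrable _ _)

theorem integral_sq_weightedAvg_zero_le (R : ℝ) {w : ℝ → ℝ} (hw : Continuous w) :
    ∫ x in Ioo (-R) R, weightedAvg 0 w x ^ 2 ≤ 4 * ∫ x in Ioo (-R) R, w x ^ 2 := by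
  rcases le_or_gt R 0 with hR | hR
  · simp [Ioo_eq_empty (by linarith : ¬ -R < R)]
  set I := ∫ x in Ioo (-R) R, w x ^ 2
  set W : ℝ → ℝ → ℝ := fun x t => t ^ (1 / 2 : ℝ) * w (t * x) ^ 2
  have hW : Integrable (Function.uncurry W)
      ((volume.restrict (Ioo (-R) R)).prod (volume.restrict (Ioc (0:ℝ) 1))) := by
    have hc : Continuous (Function.uncurry W) :=
      ((Real.continuous_rpow_const (by norm_num)).comp continuous_snd).mul
        ((hw.comp (continuous_snd.mul continuous_fst)).pow 2)
    rw [Measure.prod_restrict, ← Measure.volume_eq_prod]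
    exact (hc.continuousOn.integrableOn_compact (isCompact_Icc.prod isCompact_Icc)).mono_set
      (prod_mono Ioo_subset_Icc_self Ioc_subset_Icc_self)
  have h_inner : ∀ t ∈ Ioc (0:ℝ) 1, ∫ x in Ioo (-R) R, W x t ≤ t ^ (-(1 / 2) : ℝ) * I := by
    intro t ht
    rw [MeasureTheory.integral_const_mul, show t ^ (-(1 / 2) : ℝ) = t ^ (1 / 2 : ℝ) * t⁻¹ by
      rw [← Real.rpow_neg_one, ← Real.rpow_add ht.1]; norm_num, mul_assoc]
    exact mul_le_mul_of_nonneg_left (integral_sq_comp_mul_le hR.le ht hw)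
      (Real.rpow_nonneg ht.1.le _)
  calc ∫ x in Ioo (-R) R, weightedAvg 0 w x ^ 2
      ≤ ∫ x in Ioo (-R) R, 2 * ∫ t in Ioc (0:ℝ) 1, W x t :=
        integral_mono_of_nonneg (Filter.Eventually.of_forall fun x => sq_nonneg _)
          (hW.integral_prod_left.const_mul 2)
          (Filter.Eventually.of_forall fun x => sq_weightedAvg_zero_le hw x)
    _ = 2 * ∫ t in Ioc (0:ℝ) 1, ∫ x in Ioo (-R) R, W x t := by
        rw [MeasureTheory.integral_const_mul, integral_integral_swap hW]
    _ ≤ 2 * ∫ t in Ioc (0:ℝ) 1, t ^ (-(1 / 2) : ℝ) * I := by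
        refine mul_le_mul_of_nonneg_left (setIntegral_mono_on ?_ ?_ measurableSet_Ioc h_inner)
          zero_le_two
        · exact hW.integral_prod_right
        · exact integrableOn_rpow_neg_half.mul_const I
    _ = 4 * I := by
        rw [MeasureTheory.integral_mul_const, integral_rpow_neg_half]; ring

noncomputable def jetNorm (k : ℕ) (f : ℝ → ℝ) (x : ℝ) : ℝ :=
  ∑ j ∈ Finset.range (k + 1), |iteratedDeriv j f x|

theorem jetNorm_nonneg (k : ℕ) (f : ℝ → ℝ) (x : ℝ) : 0 ≤ jetNorm k f x :=
  Finset.sum_nonneg fun _ _ => abs_nonneg _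

theorem abs_iteratedDeriv_le_jetNorm {j k : ℕ} (hj : j ≤ k) (f : ℝ → ℝ) (x : ℝ) :
    |iteratedDeriv j f x| ≤ jetNorm k f x :=
  Finset.single_le_sum (f := fun i => |iteratedDeriv i f x|) (fun _ _ => abs_nonneg _)
    (Finset.mem_range_succ_iff.2 hj)

theorem continuous_jetNorm {k : ℕ} {f : ℝ → ℝ} (hf : ContDiff ℝ k f) :
    Continuous (jetNorm k f) :=
  continuous_finsetSum _ fun j hj => (hf.continuous_iteratedDeriv j
    (by exact_mod_cast Finset.mem_range_succ_iff.1 hj)).abs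

theorem exists_pos_jetNorm_le {k : ℕ} {f : ℝ → ℝ} (hf : ContDiff ℝ k f) (a b : ℝ) :
    ∃ M > 0, ∀ x ∈ Icc a b, jetNorm k f x ≤ M := by
  obtain ⟨C, hC⟩ := (isCompact_Icc (a := a) (b := b)).exists_bound_of_continuousOn
    (continuous_jetNorm hf).continuousOn
  exact ⟨max C 1, by positivity,
    fun x hx => (le_abs_self _).trans ((hC x hx).trans (le_max_left _ _))⟩

theorem abs_iteratedDeriv_mul_le {k j : ℕ} (hj : j ≤ k) {g u : ℝ → ℝ} (hg : ContDiff ℝ k g)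
    (hu : ContDiff ℝ k u) (x : ℝ) :
    |iteratedDeriv j (fun y => g y * u y) x| ≤ 2 ^ k * jetNorm k g x * jetNorm k u x := by
  have h := norm_iteratedFDeriv_mul_le hg hu x (n := j) (by exact_mod_cast hj)
  simp only [norm_iteratedFDeriv_eq_norm_iteratedDeriv, Real.norm_eq_abs] at h
  refine h.trans ?_
  calc ∑ i ∈ Finset.range (j + 1),
        (j.choose i : ℝ) * |iteratedDeriv i g x| * |iteratedDeriv (j - i) u x|
      ≤ ∑ i ∈ Finset.range (j + 1), (j.choose i : ℝ) * (jetNorm k g x * jetNorm k u x) := by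
        refine Finset.sum_le_sum fun i hi => ?_
        have hij : i ≤ j := Finset.mem_range_succ_iff.1 hi
        rw [mul_assoc]
        gcongr
        · exact jetNorm_nonneg k g x
        · exact abs_iteratedDeriv_le_jetNorm (hij.trans hj) g x
        · exact abs_iteratedDeriv_le_jetNorm ((j.sub_le i).trans hj) u x
    _ = 2 ^ j * (jetNorm k g x * jetNorm k u x) := by
        rw [← Finset.sum_mul, ← Nat.cast_sum, Nat.sum_range_choose, Nat.cast_pow, Nat.cast_ofNat]
    _ ≤ 2 ^ k * jetNorm k g x * jetNorm k u x := by
        rw [mul_assoc]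
        gcongr
        · exact mul_nonneg (jetNorm_nonneg _ _ _) (jetNorm_nonneg _ _ _)
        · exact one_le_two

theorem jetNorm_weightedAvg_le (n : ℕ) {k : ℕ} {u w : ℝ → ℝ} (hu : ContDiff ℝ k u)
    (hw : Continuous w) {C x : ℝ}
    (h : ∀ t ∈ Icc (0:ℝ) 1, ∀ j ≤ k, |iteratedDeriv j u (t * x)| ≤ C * w (t * x)) :
    jetNorm k (weightedAvg n u) x ≤ (k + 1) * (C * weightedAvg 0 w x) := by
  have h_term : ∀ j ∈ Finset.range (k + 1),
      |iteratedDeriv j (weightedAvg n u) x| ≤ C * weightedAvg 0 w x := by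
    intro j hj
    have hjk : j ≤ k := Finset.mem_range_succ_iff.1 hj
    rw [iteratedDeriv_weightedAvg n j (hu.of_le (by exact_mod_cast hjk))]
    exact abs_weightedAvg_le _ (hu.continuous_iteratedDeriv j (by exact_mod_cast hjk)) hw
      fun t ht => h t ht j hjk
  simpa [jetNorm] using Finset.sum_le_card_nsmul _ _ _ h_term

theorem sqrt_integral_sq_jetNorm_le (R : ℝ) {k : ℕ} {f : ℝ → ℝ} (hf : ContDiff ℝ k f) :
    √(∫ x in Ioo (-R) R, jetNorm k f x ^ 2) ≤ √(k + 1) * sob1 R k f := by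
  set I : ℕ → ℝ := fun j => ∫ x in Ioo (-R) R, iteratedDeriv j f x ^ 2
  have h_int : ∀ j ∈ Finset.range (k + 1),
      IntegrableOn (fun x => iteratedDeriv j f x ^ 2) (Ioo (-R) R) := fun j hj =>
    ((hf.continuous_iteratedDeriv j (by exact_mod_cast Finset.mem_range_succ_iff.1 hj)).pow
      2).integrableOn_Icc.mono_set Ioo_subset_Icc_self
  have h_sq : ∫ x in Ioo (-R) R, jetNorm k f x ^ 2 ≤ (k + 1) * ∑ j ∈ Finset.range (k + 1), I j := by
    rw [← integral_finsetSum _ h_int, ← MeasureTheory.integral_const_mul]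
    refine integral_mono_of_nonneg (Filter.Eventually.of_forall fun x => sq_nonneg _)
      ((integrable_finsetSum _ h_int).const_mul _) (Filter.Eventually.of_forall fun x => ?_)
    simpa [jetNorm] using sq_sum_le_card_mul_sum_sq (s := Finset.range (k + 1))
      (f := fun j => |iteratedDeriv j f x|)
  calc √(∫ x in Ioo (-R) R, jetNorm k f x ^ 2)
      ≤ √((k + 1) * ∑ j ∈ Finset.range (k + 1), I j) := Real.sqrt_le_sqrt h_sq
    _ = √(k + 1) * √(∑ j ∈ Finset.range (k + 1), I j) := Real.sqrt_mul (by positivity) _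
    _ ≤ √(k + 1) * sob1 R k f := by
        gcongr
        exact sqrt_sum_le_sum_sqrt _ fun j _ =>
          setIntegral_nonneg measurableSet_Ioo fun x _ => sq_nonneg _

theorem sob1_le_of_abs_iteratedDeriv_le {R D : ℝ} {k : ℕ} {g w : ℝ → ℝ} (hw : Continuous w)
    (hD : 0 ≤ D)
    (h : ∀ j ≤ k, ∀ x ∈ Ioo (-R) R, |iteratedDeriv j g x| ≤ D * weightedAvg 0 w x) :
    sob1 R k g ≤ (k + 1) * (2 * D * √(∫ x in Ioo (-R) R, w x ^ 2)) := by
  set I := ∫ x in Ioo (-R) R, w x ^ 2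
  have hHw : IntegrableOn (fun x => (D * weightedAvg 0 w x) ^ 2) (Ioo (-R) R) :=
    ((continuous_const.mul (contDiff_weightedAvg 0 0 (contDiff_zero.2 hw)).continuous).pow
      2).integrableOn_Icc.mono_set Ioo_subset_Icc_self
  have h_term : ∀ j ∈ Finset.range (k + 1),
      √(∫ x in Ioo (-R) R, iteratedDeriv j g x ^ 2) ≤ 2 * D * √I := by
    intro j hj
    have h_sq : ∫ x in Ioo (-R) R, iteratedDeriv j g x ^ 2 ≤ (2 * D) ^ 2 * I :=
      calc ∫ x in Ioo (-R) R, iteratedDeriv j g x ^ 2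
          ≤ ∫ x in Ioo (-R) R, (D * weightedAvg 0 w x) ^ 2 := by
            refine integral_mono_of_nonneg (Filter.Eventually.of_forall fun x => sq_nonneg _) hHw
              ((ae_restrict_iff' measurableSet_Ioo).2 (Filter.Eventually.of_forall fun x hx => ?_))
            exact sq_le_sq.2 ((h j (Finset.mem_range_succ_iff.1 hj) x hx).trans (le_abs_self _))
        _ = D ^ 2 * ∫ x in Ioo (-R) R, weightedAvg 0 w x ^ 2 := by
            simp only [mul_pow, MeasureTheory.integral_const_mul]
        _ ≤ D ^ 2 * (4 * I) := by
            gcongr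
            exact integral_sq_weightedAvg_zero_le R hw
        _ = (2 * D) ^ 2 * I := by ring
    calc √(∫ x in Ioo (-R) R, iteratedDeriv j g x ^ 2) ≤ √((2 * D) ^ 2 * I) :=
          Real.sqrt_le_sqrt h_sq
      _ = 2 * D * √I := by rw [Real.sqrt_mul (by positivity), Real.sqrt_sq (by positivity)]
  simpa [sob1] using Finset.sum_le_card_nsmul _ _ _ h_term

theorem sob1_congr_of_eqOn_compl_singleton (R : ℝ) (k : ℕ) {f g : ℝ → ℝ} {a : ℝ}
    (h : EqOn f g {a}ᶜ) : sob1 R k f = sob1 R k g := by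
  have h_ae : ∀ᵐ x ∂(volume : Measure ℝ), x ≠ a := by simp [ae_iff]
  refine Finset.sum_congr rfl fun j _ => congrArg _ (integral_congr_ae ?_)
  filter_upwards [ae_restrict_of_ae h_ae] with x hx
  rw [Filter.EventuallyEq.iteratedDeriv_eq j
    (Filter.eventually_of_mem (isOpen_compl_singleton.mem_nhds hx) h)]

noncomputable def tintExt (m n : ℕ) (φ f : ℝ → ℝ) (x : ℝ) : ℝ :=
  x ^ (n + 1 - m) * weightedAvg n (fun y => φ y * f y) x

theorem tintExt_eq_Tint {m n : ℕ} (hmn : m ≤ n + 1) (φ f : ℝ → ℝ) {x : ℝ} (hx : x ≠ 0) :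
    tintExt m n φ f x = Tint m n φ f x := by
  have h_pow : x ^ (n + 1) = x ^ (n + 1 - m) * x ^ m := by
    rw [← pow_add, Nat.sub_add_cancel hmn]
  have hx' : x ^ (n + 1 - m) ≠ 0 := pow_ne_zero _ hx
  simp only [tintExt, Tint, weightedAvg_eq_div n _ hx, h_pow, mul_assoc]
  field_simp

theorem contDiff_tintExt (m n N : ℕ) {φ f : ℝ → ℝ} (hφ : ContDiff ℝ N φ)
    (hf : ContDiff ℝ N f) : ContDiff ℝ N (tintExt m n φ f) :=
  (contDiff_id.pow _).mul (contDiff_weightedAvg n N (hφ.mul hf))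

theorem exists_abs_iteratedDeriv_tintExt_le (R : ℝ) (k m n : ℕ) {φ : ℝ → ℝ}
    (hφ : ContDiff ℝ k φ) :
    ∃ D > 0, ∀ f : ℝ → ℝ, ContDiff ℝ k f → ∀ j ≤ k, ∀ x ∈ Icc (-R) R,
      |iteratedDeriv j (tintExt m n φ f) x| ≤ D * weightedAvg 0 (jetNorm k f) x := by
  have hP : ContDiff ℝ k fun x : ℝ => x ^ (n + 1 - m) := contDiff_id.pow _
  obtain ⟨MP, hMP, hMP_le⟩ := exists_pos_jetNorm_le hP (-R) R
  obtain ⟨Mφ, hMφ, hMφ_le⟩ := exists_pos_jetNorm_le hφ (-R) R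
  refine ⟨2 ^ k * MP * ((k + 1) * (2 ^ k * Mφ)), by positivity, fun f hf j hj x hx => ?_⟩
  have hu : ContDiff ℝ k fun y => φ y * f y := hφ.mul hf
  have h_scaled : ∀ t ∈ Icc (0:ℝ) 1, t * x ∈ Icc (-R) R := fun t ht =>
    (convex_Icc (-R) R).smul_mem_of_zero_mem ⟨by linarith [hx.1, hx.2], by linarith [hx.1, hx.2]⟩
      hx ht
  have h_avg : jetNorm k (weightedAvg n fun y => φ y * f y) x
      ≤ (k + 1) * (2 ^ k * Mφ * weightedAvg 0 (jetNorm k f) x) := by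
    refine jetNorm_weightedAvg_le n hu (continuous_jetNorm hf) fun t ht b hb => ?_
    refine (abs_iteratedDeriv_mul_le hb hφ hf _).trans ?_
    gcongr
    · exact jetNorm_nonneg k f _
    · exact hMφ_le _ (h_scaled t ht)
  calc |iteratedDeriv j (tintExt m n φ f) x|
      ≤ 2 ^ k * jetNorm k (fun x : ℝ => x ^ (n + 1 - m)) x
          * jetNorm k (weightedAvg n fun y => φ y * f y) x :=
        abs_iteratedDeriv_mul_le hj hP (contDiff_weightedAvg n k hu) x
    _ ≤ 2 ^ k * MP * ((k + 1) * (2 ^ k * Mφ * weightedAvg 0 (jetNorm k f) x)) := by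
        gcongr
        · exact jetNorm_nonneg _ _ _
        · exact hMP_le x hx
    _ = _ := by ring

theorem integral_operator_bound_general (R : ℝ) (k m n : ℕ)
    (hmn : m ≤ n + 1) (φ : ℝ → ℝ) (hφ : ContDiff ℝ (⊤ : ℕ∞) φ) :
    -- (1) smooth extension across the origin
    (∀ f : ℝ → ℝ, ContDiff ℝ (⊤ : ℕ∞) f →
      ∃ g : ℝ → ℝ, ContDiff ℝ (⊤ : ℕ∞) g ∧
        ∀ x ∈ Set.Icc (-R) R, x ≠ 0 → g x = Tint m n φ f x) ∧
    -- (2) Sobolev boundedness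
    (∃ C > (0 : ℝ), ∀ f : ℝ → ℝ, ContDiff ℝ (⊤ : ℕ∞) f →
      sob1 R k (Tint m n φ f) ≤ C * sob1 R k f) := by
  have h_of_top {u : ℝ → ℝ} (hu : ContDiff ℝ (⊤ : ℕ∞) u) (N : ℕ) : ContDiff ℝ N u :=
    hu.of_le (by exact_mod_cast le_top)
  refine ⟨fun f hf => ⟨tintExt m n φ f,
    contDiff_infty.2 fun N => contDiff_tintExt m n N (h_of_top hφ N) (h_of_top hf N),
    fun x _ hx => tintExt_eq_Tint hmn φ f hx⟩, ?_⟩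
  obtain ⟨D, hD, h_bound⟩ := exists_abs_iteratedDeriv_tintExt_le R k m n (h_of_top hφ k)
  refine ⟨(k + 1) * (2 * D * √(k + 1)), by positivity, fun f hf => ?_⟩
  have hfk := h_of_top hf k
  rw [sob1_congr_of_eqOn_compl_singleton R k fun x hx => (tintExt_eq_Tint hmn φ f hx).symm]
  calc sob1 R k (tintExt m n φ f)
      ≤ (k + 1) * (2 * D * √(∫ x in Ioo (-R) R, jetNorm k f x ^ 2)) :=
        sob1_le_of_abs_iteratedDeriv_le (continuous_jetNorm hfk) hD.le
          fun j hj x hx => h_bound f hfk j hj x (Ioo_subset_Icc_self hx)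
    _ ≤ (k + 1) * (2 * D * (√(k + 1) * sob1 R k f)) := by
        gcongr
        exact sqrt_integral_sq_jetNorm_le R hfk
    _ = (k + 1) * (2 * D * √(k + 1)) * sob1 R k f := by ring

theorem integral_operator_bound (R : ℝ) (hR : 0 < R) (k m n : ℕ)
    (hmn : m ≤ n + 1) (φ : ℝ → ℝ) (hφ : ContDiff ℝ (⊤ : ℕ∞) φ) :
    -- (1) smooth extension across the origin
    (∀ f : ℝ → ℝ, ContDiff ℝ (⊤ : ℕ∞) f →
      ∃ g : ℝ → ℝ, ContDiff ℝ (⊤ : ℕ∞) g ∧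
        ∀ x ∈ Set.Icc (-R) R, x ≠ 0 → g x = Tint m n φ f x) ∧
    -- (2) Sobolev boundedness
    (∃ C > (0 : ℝ), ∀ f : ℝ → ℝ, ContDiff ℝ (⊤ : ℕ∞) f →
      sob1 R k (Tint m n φ f) ≤ C * sob1 R k f) :=
  integral_operator_bound_general R k m n hmn φ hφ
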